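/- Let H be a Hilbert space and (B_1^{(k)},...,B_n^{(k)}) for each k an orthonormal system obtained by Gram–Schmidt from unit vectors (E_{a_1^{(k)}},...,E_{a_n^{(k)}}). Suppose f ∈ H, an index l₀ < n, and: (a) B_j^{(k)} → B_j in norm for j ≤ l₀; (b) ⟨f, E_{a_t^{(k)}}⟩ → 0 and ⟨E_{a_t^{(k)}}, B_j⟩ → 0 for all t > l₀ and j ≤ l₀, as k → ∞; (c) the Gram–Schmidt normalization denominators ‖E_{a_t^{(k)}} − Σ_{j<t} ⟨E_{a_t^{(k)}}, B_j^{(k)}⟩ B_j^{(k)}‖ are bounded below by a positive constant, and ⟨E_{a_t^{(k)}}, E_{a_s^{(k)}}⟩ → 0 for l₀ < s < t. Then ⟨f, B_t^{(k)}⟩ → 0 as k → ∞ for every t with l₀ < t ≤ n. -/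

import Mathlib

/-
The coefficient of `f` on `B_t = GS t / ‖GS t‖` is
`‖GS t‖⁻¹ (⟨f, v t⟩ - ∑_{j<t} ⟨B_j, v t⟩⟨f, B_j⟩)`. As the denominators stay away from `0`, it
suffices that `⟨v t, B_j⟩ → 0` for every `j < t`. For a convergent index `j` this follows from
`B_j^{(k)} → B_j` and `⟨v t, B_j⟩ → 0`; for an escaping index `j` it is the claim itself at `j`,
with `f` replaced by the bounded sequence `v t`. So the claim is proved for all bounded sequences
in place of `f`, by well-founded induction on `t`.
-/

open Filter

noncomputable section

/-- Gram–Schmidt orthogonalization (non-normalized) of a tuple `v : Fin n → H`. -/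
def GS {H : Type*} [NormedAddCommGroup H] [InnerProductSpace ℂ H]
    (n : ℕ) [NeZero n] (v : Fin n → H) : Fin n → H :=
  @InnerProductSpace.gramSchmidt ℂ H _ _ _ (Fin n) _ _ (inferInstance : WellFoundedLT (Fin n)) v

/-- Gram–Schmidt orthonormalization of a tuple `v : Fin n → H`. -/
def GSNormed {H : Type*} [NormedAddCommGroup H] [InnerProductSpace ℂ H]
    (n : ℕ) [NeZero n] (v : Fin n → H) : Fin n → H :=
  @InnerProductSpace.gramSchmidtNormed ℂ H _ _ _ (Fin n) _ _ (inferInstance : WellFoundedLT (Fin n)) v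

open InnerProductSpace Finset Topology

section

variable {𝕜 E α : Type*} [RCLike 𝕜] [NormedAddCommGroup E] [InnerProductSpace 𝕜 E]
  {l : Filter α}

local notation "⟪" x ", " y "⟫" => inner 𝕜 x y

lemma tendsto_inner_zero_comm {x y : α → E} :
    Tendsto (fun k => ⟪x k, y k⟫) l (𝓝 0) ↔ Tendsto (fun k => ⟪y k, x k⟫) l (𝓝 0) := by
  simp only [tendsto_zero_iff_norm_tendsto_zero (E := 𝕜), norm_inner_symm (x _)]

lemma tendsto_inner_zero_of_tendsto_right {x y : α → E} {y₀ : E}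
    (hx : IsBoundedUnder (· ≤ ·) l (fun k => ‖x k‖)) (hy : Tendsto y l (𝓝 y₀))
    (hxy₀ : Tendsto (fun k => ⟪x k, y₀⟫) l (𝓝 0)) :
    Tendsto (fun k => ⟪x k, y k⟫) l (𝓝 0) := by
  have hdiff : Tendsto (fun k => ⟪x k, y k - y₀⟫) l (𝓝 0) :=
    (tendsto_sub_nhds_zero_iff.2 hy).op_zero_isBoundedUnder_le hx (fun a b => ⟪b, a⟫)
      fun a b => (norm_inner_le_norm b a).trans_eq (mul_comm _ _)
  simpa [inner_sub_right] using hdiff.add hxy₀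

variable {ι : Type*} [LinearOrder ι] [LocallyFiniteOrderBot ι] [WellFoundedLT ι]

lemma norm_gramSchmidtNormed_le_one (f : ι → E) (n : ι) : ‖gramSchmidtNormed 𝕜 f n‖ ≤ 1 := by
  by_cases h : gramSchmidtNormed 𝕜 f n = 0
  · simp [h]
  · exact (gramSchmidtNormed_unit_length' h).le

lemma gramSchmidt_eq_sub_sum_gramSchmidtNormed (f : ι → E) (n : ι) :
    gramSchmidt 𝕜 f n =
      f n - ∑ i ∈ Iio n, ⟪gramSchmidtNormed 𝕜 f i, f n⟫ • gramSchmidtNormed 𝕜 f i := by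
  rw [gramSchmidt_def]
  congr 1
  refine sum_congr rfl fun i _ => ?_
  rcases eq_or_ne (gramSchmidt 𝕜 f i) 0 with h | h
  · simp [gramSchmidtNormed, h]
  · rw [Submodule.starProjection_singleton, gramSchmidtNormed, inner_smul_left, smul_smul]
    congr 1
    have : (‖gramSchmidt 𝕜 f i‖ : 𝕜) ≠ 0 := by simpa using h
    simp only [map_inv₀, RCLike.conj_ofReal, RCLike.ofReal_pow]
    field_simp

lemma tendsto_inner_gramSchmidtNormed_zero {v : α → ι → E} {g : α → E} {t : ι}
    (hg : IsBoundedUnder (· ≤ ·) l (fun k => ‖g k‖))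
    (hGS : IsBoundedUnder (· ≤ ·) l (fun k => ‖gramSchmidt 𝕜 (v k) t‖⁻¹))
    (hgv : Tendsto (fun k => ⟪g k, v k t⟫) l (𝓝 0))
    (hvB : ∀ j < t, Tendsto (fun k => ⟪v k t, gramSchmidtNormed 𝕜 (v k) j⟫) l (𝓝 0)) :
    Tendsto (fun k => ⟪g k, gramSchmidtNormed 𝕜 (v k) t⟫) l (𝓝 0) := by
  have hgB (j : ι) : IsBoundedUnder (· ≤ ·) l (fun k => ‖⟪g k, gramSchmidtNormed 𝕜 (v k) j⟫‖) :=
    hg.mono_le <| Eventually.of_forall fun k =>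
      (norm_inner_le_norm _ _).trans <|
        mul_le_of_le_one_right (norm_nonneg _) (norm_gramSchmidtNormed_le_one _ _)
  have hGSv : Tendsto (fun k => ⟪g k, gramSchmidt 𝕜 (v k) t⟫) l (𝓝 0) := by
    simp only [gramSchmidt_eq_sub_sum_gramSchmidtNormed, inner_sub_right, inner_sum,
      inner_smul_right]
    simpa using hgv.sub <| tendsto_finsetSum _ fun j hj =>
      (tendsto_inner_zero_comm.1 (hvB j (mem_Iio.1 hj))).zero_mul_isBoundedUnder_le (hgB j)
  have hinv : IsBoundedUnder (· ≤ ·) l (norm ∘ fun k => (‖gramSchmidt 𝕜 (v k) t‖⁻¹ : 𝕜)) := by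
    simpa [Function.comp_def] using hGS
  simpa [gramSchmidtNormed, inner_smul_right] using isBoundedUnder_le_mul_tendsto_zero hinv hGSv

theorem tendsto_inner_gramSchmidtNormed_zero_of_mem {S : Set ι} {v : α → ι → E} {B : ι → E}
    (hv : ∀ t ∈ S, IsBoundedUnder (· ≤ ·) l (fun k => ‖v k t‖))
    (hB : ∀ j ∉ S, Tendsto (fun k => gramSchmidtNormed 𝕜 (v k) j) l (𝓝 (B j)))
    (hvB : ∀ t ∈ S, ∀ j ∉ S, Tendsto (fun k => ⟪v k t, B j⟫) l (𝓝 0))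
    (hGS : ∀ t ∈ S, IsBoundedUnder (· ≤ ·) l (fun k => ‖gramSchmidt 𝕜 (v k) t‖⁻¹))
    (hvv : ∀ s ∈ S, ∀ t ∈ S, s < t → Tendsto (fun k => ⟪v k t, v k s⟫) l (𝓝 0))
    {t : ι} (ht : t ∈ S) {g : α → E} (hg : IsBoundedUnder (· ≤ ·) l (fun k => ‖g k‖))
    (hgv : ∀ s ∈ S, s ≤ t → Tendsto (fun k => ⟪g k, v k s⟫) l (𝓝 0)) :
    Tendsto (fun k => ⟪g k, gramSchmidtNormed 𝕜 (v k) t⟫) l (𝓝 0) := by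
  induction t using WellFoundedLT.induction generalizing g with
  | _ t ih =>
  refine tendsto_inner_gramSchmidtNormed_zero hg (hGS t ht) (hgv t ht le_rfl) fun j hjt => ?_
  by_cases hj : j ∈ S
  · exact ih j hjt hj (hv t ht) fun s hs hsj => hvv s hs t ht (hsj.trans_lt hjt)
  · exact tendsto_inner_zero_of_tendsto_right (hv t ht) (hB j hj) (hvB t ht j hj)

end

theorem boundary_coefficients_vanish_general {H : Type*} [NormedAddCommGroup H]
    [InnerProductSpace ℂ H] (n : ℕ) [NeZero n] (l₀ : ℕ)
    (v : ℕ → Fin n → H) (hunit : ∀ k t, ‖v k t‖ = 1) (f : H) (Blim : Fin n → H)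
    -- (a) the interior Gram–Schmidt vectors converge
    (ha : ∀ j : Fin n, (j : ℕ) < l₀ →
      Tendsto (fun k => GSNormed n (v k) j) atTop (nhds (Blim j)))
    -- (b) boundary-escaping dictionary vectors decouple from `f` and from the limits
    (hb1 : ∀ t : Fin n, l₀ ≤ (t : ℕ) →
      Tendsto (fun k => (inner ℂ f (v k t) : ℂ)) atTop (nhds 0))
    (hb2 : ∀ t : Fin n, l₀ ≤ (t : ℕ) → ∀ j : Fin n, (j : ℕ) < l₀ →
      Tendsto (fun k => (inner ℂ (v k t) (Blim j) : ℂ)) atTop (nhds 0))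
    -- (c) the Gram–Schmidt normalization denominators are bounded below, and
    -- distinct boundary-escaping vectors decouple from each other
    (hc1 : ∃ ε > (0 : ℝ), ∀ k, ∀ t : Fin n, ε ≤ ‖GS n (v k) t‖)
    (hc2 : ∀ s t : Fin n, l₀ ≤ (s : ℕ) → s < t →
      Tendsto (fun k => (inner ℂ (v k t) (v k s) : ℂ)) atTop (nhds 0)) :
    ∀ t : Fin n, l₀ ≤ (t : ℕ) →
      Tendsto (fun k => (inner ℂ f (GSNormed n (v k) t) : ℂ)) atTop (nhds 0) := by
  obtain ⟨ε, hε, hεGS⟩ := hc1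
  intro t ht
  exact tendsto_inner_gramSchmidtNormed_zero_of_mem (S := {t : Fin n | l₀ ≤ t}) (B := Blim)
    (fun t _ => isBoundedUnder_of ⟨1, fun k => (hunit k t).le⟩)
    (fun j hj => ha j (not_le.1 hj)) (fun t ht j hj => hb2 t ht j (not_le.1 hj))
    (fun t _ => isBoundedUnder_of ⟨ε⁻¹, fun k => inv_anti₀ hε (hεGS k t)⟩)
    (fun s hs t _ hst => hc2 s t hs hst) ht isBoundedUnder_const (fun s hs _ => hb1 s hs)

/-- Key induction lemma: vanishing of the boundary-escaping Gram–Schmidt coefficients.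
For each `k`, `B^{(k)} = GSNormed (v k)` is obtained by Gram–Schmidt from unit vectors
`v k = (E_{a₁^{(k)}}, ..., E_{aₙ^{(k)}})`. Under hypotheses (a)–(c),
`⟨f, B_t^{(k)}⟩ → 0` as `k → ∞` for every `t` with `l₀ < t ≤ n` (0-indexed:
`l₀ ≤ t < n`). -/
theorem boundary_coefficients_vanish {H : Type*} [NormedAddCommGroup H]
    [InnerProductSpace ℂ H] (n : ℕ) [NeZero n] (l₀ : ℕ) (hl₀ : l₀ < n)
    (v : ℕ → Fin n → H) (hunit : ∀ k t, ‖v k t‖ = 1) (f : H) (Blim : Fin n → H)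
    -- (a) the interior Gram–Schmidt vectors converge
    (ha : ∀ j : Fin n, (j : ℕ) < l₀ →
      Tendsto (fun k => GSNormed n (v k) j) atTop (nhds (Blim j)))
    -- (b) boundary-escaping dictionary vectors decouple from `f` and from the limits
    (hb1 : ∀ t : Fin n, l₀ ≤ (t : ℕ) →
      Tendsto (fun k => (inner ℂ f (v k t) : ℂ)) atTop (nhds 0))
    (hb2 : ∀ t : Fin n, l₀ ≤ (t : ℕ) → ∀ j : Fin n, (j : ℕ) < l₀ →
      Tendsto (fun k => (inner ℂ (v k t) (Blim j) : ℂ)) atTop (nhds 0))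
    -- (c) the Gram–Schmidt normalization denominators are bounded below, and
    -- distinct boundary-escaping vectors decouple from each other
    (hc1 : ∃ ε > (0 : ℝ), ∀ k, ∀ t : Fin n, ε ≤ ‖GS n (v k) t‖)
    (hc2 : ∀ s t : Fin n, l₀ ≤ (s : ℕ) → s < t →
      Tendsto (fun k => (inner ℂ (v k t) (v k s) : ℂ)) atTop (nhds 0)) :
    ∀ t : Fin n, l₀ ≤ (t : ℕ) →
      Tendsto (fun k => (inner ℂ f (GSNormed n (v k) t) : ℂ)) atTop (nhds 0) :=
  boundary_coefficients_vanish_general n l₀ v hunit f Blim ha hb1 hb2 hc1 hc2
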